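/- arXiv:0809.3106 — 2 statements merged into one kernel-verified Lean document; each statement's English description precedes it below -/
import Mathlib

section
/- For every φ ∈ L^∞(X,m) and every α-invariant measure μ ∈ M_α(X,m), one has λ(φ) ≥ μ(φ) + τ(μ). -/
open MeasureTheory Filter Topology
open scoped Classical ENNReal NNReal

noncomputable section

namespace TEntropyPaper

variable {X : Type*} [MeasurableSpace X]

/-- The mapping `α` is measurable and the shift operator `A f = f ∘ α` is bounded on
`L¹(X, m)`; equivalently `m (α⁻¹ G) ≤ C · m G` for all measurable `G`. -/
def ShiftBounded (m : Measure X) (α : X → X) : Prop :=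
  Measurable α ∧ ∃ C : ℝ≥0, ∀ s : Set X, MeasurableSet s → m (α ⁻¹' s) ≤ (C : ℝ≥0∞) * m s

/-- A positive normalized linear functional on `L^∞(X, m)`, encoded as a real-valued
map on functions `X → ℝ` which is linear and positive on essentially bounded
(strongly) measurable functions, respects `m`-a.e. equality, takes the value `1` at the
constant function `1` and (as a normalization) vanishes on functions not in `L^∞`. -/
structure PosFunctional (m : Measure X) where
  toFun : (X → ℝ) → ℝ
  map_add' : ∀ f g : X → ℝ, MemLp f ⊤ m → MemLp g ⊤ m → toFun (f + g) = toFun f + toFun g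
  map_smul' : ∀ (c : ℝ) (f : X → ℝ), MemLp f ⊤ m → toFun (c • f) = c * toFun f
  nonneg' : ∀ f : X → ℝ, MemLp f ⊤ m → (0 : X → ℝ) ≤ᵐ[m] f → 0 ≤ toFun f
  map_one' : toFun (fun _ => 1) = 1
  congr_ae' : ∀ f g : X → ℝ, MemLp f ⊤ m → MemLp g ⊤ m → f =ᵐ[m] g → toFun f = toFun g
  zero_of_ne' : ∀ f : X → ℝ, ¬ MemLp f ⊤ m → toFun f = 0

/-- Evaluation of a functional in `M(X,m)` against the `L^∞` test functions. -/
def evalMap (m : Measure X) (μ : PosFunctional m) : {f : X → ℝ // MemLp f ⊤ m} → ℝ :=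
  fun f => μ.toFun f.1

/-- The weak-* topology on `M(X,m)`: the topology of pointwise convergence on `L^∞`
test functions. -/
instance (m : Measure X) : TopologicalSpace (PosFunctional m) :=
  TopologicalSpace.induced (evalMap m) inferInstance

/-- `α`-invariance of a functional `μ ∈ M(X,m)`: `μ(f ∘ α) = μ(f)`. -/
def PosFunctional.Invariant (α : X → X) {m : Measure X} (μ : PosFunctional m) : Prop :=
  ∀ f : X → ℝ, MemLp f ⊤ m → μ.toFun (f ∘ α) = μ.toFun f

/-- A measurable partition of unity on `X`: a finite set of nonnegative functions in
`L^∞(X,m)` summing to `1` almost everywhere. -/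
def IsPartUnity (m : Measure X) (D : Finset (X → ℝ)) : Prop :=
  (∀ g ∈ D, MemLp g ⊤ m ∧ (0 : X → ℝ) ≤ᵐ[m] g) ∧ ∀ᵐ x ∂m, ∑ g ∈ D, g x = 1

/-- Birkhoff sum `S_n φ = φ + φ∘α + ⋯ + φ∘α^{n-1}`. -/
def birkhoff (α : X → X) (φ : X → ℝ) (n : ℕ) (x : X) : ℝ :=
  ∑ i ∈ Finset.range n, φ (α^[i] x)

/-- The unit sphere of `L¹(X,m)`. -/
def UnitL1 (m : Measure X) : Set (X → ℝ) := {f | Integrable f m ∧ ∫ x, |f x| ∂m = 1}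

/-- The integral `∫_X g · |f ∘ αⁿ| dm`. -/
def wInt (m : Measure X) (α : X → X) (n : ℕ) (g f : X → ℝ) : ℝ :=
  ∫ x, g x * |f (α^[n] x)| ∂m

/-- The summand `w · ln((∫_X g·|f∘αⁿ| dm)/w)` in the definition of `t`-entropy,
with values in `EReal`: it is `0` when `w = 0` and `-∞` when the integral vanishes
while `w ≠ 0`. -/
def tauTermR (m : Measure X) (α : X → X) (n : ℕ) (w : ℝ) (f g : X → ℝ) : EReal :=
  if w = 0 then 0
  else if wInt m α n g f = 0 then ⊥
  else ((w * Real.log (wInt m α n g f / w) : ℝ) : EReal)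

/-- `τ_n(w, D)` for an abstract weight function `w` on the elements of `D`. -/
def tauNDW (m : Measure X) (α : X → X) (n : ℕ) (D : Finset (X → ℝ))
    (w : (X → ℝ) → ℝ) : EReal :=
  if ∃ g ∈ D, (∫⁻ x, ENNReal.ofReal (g x) ∂m) = 0 ∧ 0 < w g then ⊥
  else ⨆ f ∈ UnitL1 m, ∑ g ∈ D, tauTermR m α n (w g) f g

/-- `τ_n(μ, D)` for `μ ∈ M(X,m)` and a measurable partition of unity `D`. -/
def tauND (m : Measure X) (α : X → X) (μ : PosFunctional m) (n : ℕ)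
    (D : Finset (X → ℝ)) : EReal :=
  tauNDW m α n D (fun g => μ.toFun g)

/-- `τ_n(μ) = inf_D τ_n(μ, D)` over all measurable partitions of unity `D`. -/
def tauN (m : Measure X) (α : X → X) (μ : PosFunctional m) (n : ℕ) : EReal :=
  ⨅ D ∈ {D : Finset (X → ℝ) | IsPartUnity m D}, tauND m α μ n D

/-- The `t`-entropy `τ(μ) = inf_{n ≥ 1} τ_n(μ)/n`. -/
def tEntropy (m : Measure X) (α : X → X) (μ : PosFunctional m) : EReal :=
  ⨅ n : {k : ℕ // 0 < k}, ((((n : ℕ) : ℝ)⁻¹ : ℝ) : EReal) * tauN m α μ (n : ℕ)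

/-- The operator norm `‖A_φⁿ‖` of the `n`-th power of the weighted shift operator
`A_φ f = e^φ · (f ∘ α)` on `L¹(X,m)`, i.e. the supremum of `∫ e^{S_nφ}|f∘αⁿ| dm`
over the unit sphere of `L¹`. -/
def weightedOpNorm (m : Measure X) (α : X → X) (φ : X → ℝ) (n : ℕ) : ℝ :=
  sSup {r : ℝ | ∃ f ∈ UnitL1 m,
    r = ∫ x, Real.exp (birkhoff α φ n x) * |f (α^[n] x)| ∂m}

/-- `D_m`: the elements of `D` which are not `m`-a.e. zero (i.e. `∫ g dm > 0`). -/
def Dm (m : Measure X) (D : Finset (X → ℝ)) : Finset (X → ℝ) :=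
  D.filter (fun g => (∫⁻ x, ENNReal.ofReal (g x) ∂m) ≠ 0)

/-- The simplex `M(D)` of probability measures on the finite set `D`, realized as
weight functions vanishing outside `D`. -/
def MD (D : Finset (X → ℝ)) : Set ((X → ℝ) → ℝ) :=
  {w | (∀ g ∈ D, 0 ≤ w g) ∧ (∑ g ∈ D, w g) = 1 ∧ ∀ g ∉ D, w g = 0}

/-- The sum `Σ_{g ∈ D_m} w(g)·ln((∫ g·|f∘αⁿ| dm)/w(g))`. -/
def tauSumDm (m : Measure X) (α : X → X) (n : ℕ) (D : Finset (X → ℝ))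
    (w : (X → ℝ) → ℝ) (f : X → ℝ) : EReal :=
  ∑ g ∈ Dm m D, tauTermR m α n (w g) f g

/-- `τ_n(w, D)` with the sum restricted to `D_m`, for `w ∈ M(D_m)`. -/
def tauDm (m : Measure X) (α : X → X) (n : ℕ) (D : Finset (X → ℝ))
    (w : (X → ℝ) → ℝ) : EReal :=
  ⨆ f ∈ UnitL1 m, tauSumDm m α n D w f

/-- `w'` is an optimizing limit for `(w, n, D)`: there is a sequence of nonnegative
unit-norm `f_i ∈ L¹(X,m)` along which the supremum defining `τ_n(w,D)` is attained in
the limit and `w'(g) = lim_i ∫ g·(f_i∘αⁿ) dm` for each `g ∈ D_m`. -/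
def IsOptLimit (m : Measure X) (α : X → X) (n : ℕ) (D : Finset (X → ℝ))
    (w w' : (X → ℝ) → ℝ) : Prop :=
  ∃ F : ℕ → (X → ℝ),
    (∀ i, F i ∈ UnitL1 m ∧ (0 : X → ℝ) ≤ᵐ[m] F i) ∧
    (∀ g ∈ Dm m D, Tendsto (fun i => wInt m α n g (F i)) atTop (𝓝 (w' g))) ∧
    Tendsto (fun i => tauSumDm m α n D w (F i)) atTop (𝓝 (tauDm m α n D w))



/-!
Fix `n` and partition `X` by the integer part of a bounded measurable version `ψ` of the Birkhoff
sum `S_n φ`, i.e. into the level sets `{⌊ψ⌋ = j}` with indicators `g_j`. Invariance of `μ` gives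
`n μ(φ) = μ(S_n φ) ≤ ∑ⱼ (j + 1) μ(g_j)`. On the other hand, for every `f` on the unit sphere of `L¹`
the concavity of `log` (Gibbs' inequality with weights `μ(g_j)`) gives
`∑ⱼ μ(g_j) ln(∫ g_j |f ∘ αⁿ| / μ(g_j)) ≤ ln ∑ⱼ e^j ∫ g_j |f ∘ αⁿ| - ∑ⱼ j μ(g_j)`,
and `∑ⱼ e^j g_j ≤ e^{S_n φ}` bounds the logarithm on the right by `ln ‖A_φⁿ‖`. Hence
`τ_n(μ) ≤ ln ‖A_φⁿ‖ - n μ(φ) + 1`; divide by `n` and let `n → ∞`.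
-/
namespace ShiftBounded

variable {m : Measure X} {α β : X → X}

lemma id : ShiftBounded m id :=
  ⟨measurable_id, 1, fun s _ => by simp⟩

lemma comp (hα : ShiftBounded m α) (hβ : ShiftBounded m β) : ShiftBounded m (α ∘ β) := by
  obtain ⟨hαm, A, hA⟩ := hα
  obtain ⟨hβm, B, hB⟩ := hβ
  refine ⟨hαm.comp hβm, B * A, fun s hs => ?_⟩
  calc m (β ⁻¹' (α ⁻¹' s)) ≤ B * m (α ⁻¹' s) := hB _ (hαm hs)
    _ ≤ B * (A * m s) := by gcongr; exact hA s hs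
    _ = ((B * A : ℝ≥0) : ℝ≥0∞) * m s := by push_cast; ring

lemma iterate (hα : ShiftBounded m α) (k : ℕ) : ShiftBounded m α^[k] := by
  induction k with
  | zero => exact ShiftBounded.id
  | succ k ih => rw [Function.iterate_succ]; exact ih.comp hα

lemma exists_map_le (hα : ShiftBounded m α) : ∃ C : ℝ≥0, m.map α ≤ (C : ℝ≥0∞) • m := by
  obtain ⟨hαm, C, hC⟩ := hα
  refine ⟨C, Measure.le_iff.2 fun s hs => ?_⟩
  rw [Measure.map_apply hαm hs, Measure.smul_apply, smul_eq_mul]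
  exact hC s hs

lemma quasiMeasurePreserving (hα : ShiftBounded m α) :
    Measure.QuasiMeasurePreserving α m m := by
  obtain ⟨C, hC⟩ := hα.exists_map_le
  exact ⟨hα.1, (Measure.absolutelyContinuous_of_le hC).trans Measure.smul_absolutelyContinuous⟩

lemma exists_integral_abs_comp_le (hα : ShiftBounded m α) :
    ∃ C : ℝ, ∀ f : X → ℝ, Integrable f m →
      Integrable (fun x => f (α x)) m ∧ ∫ x, |f (α x)| ∂m ≤ C * ∫ x, |f x| ∂m := by
  obtain ⟨C, hC⟩ := hα.exists_map_le
  refine ⟨C, fun f hf => ?_⟩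
  have hfC : Integrable f ((C : ℝ≥0∞) • m) := hf.smul_measure ENNReal.coe_ne_top
  have hfmap : Integrable f (m.map α) := hfC.mono_measure hC
  refine ⟨(integrable_map_measure hfmap.aestronglyMeasurable hα.1.aemeasurable).1 hfmap, ?_⟩
  calc ∫ x, |f (α x)| ∂m = ∫ y, |f y| ∂(m.map α) :=
        (integral_map hα.1.aemeasurable hfmap.abs.aestronglyMeasurable).symm
    _ ≤ ∫ y, |f y| ∂((C : ℝ≥0∞) • m) :=
        integral_mono_measure hC (ae_of_all _ fun _ => abs_nonneg _) hfC.abs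
    _ = C * ∫ x, |f x| ∂m := by rw [integral_smul_measure]; simp

end ShiftBounded

lemma _root_.MeasureTheory.MemLp.exists_ae_abs_le {m : Measure X} {u : X → ℝ}
    (hu : MemLp u ⊤ m) : ∃ K : ℝ, ∀ᵐ x ∂m, |u x| ≤ K := by
  refine ⟨(eLpNorm u ⊤ m).toReal, ?_⟩
  filter_upwards [ae_le_eLpNormEssSup (f := u) (μ := m)] with x hx
  rw [← Real.norm_eq_abs, ← toReal_enorm, eLpNorm_exponent_top]
  exact ENNReal.toReal_mono (by simpa [eLpNorm_exponent_top] using hu.2.ne) hx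

lemma _root_.MeasureTheory.MemLp.comp_quasiMeasurePreserving_top {m : Measure X} {u : X → ℝ}
    {β : X → X} (hu : MemLp u ⊤ m) (hβ : Measure.QuasiMeasurePreserving β m m) :
    MemLp (u ∘ β) ⊤ m := by
  obtain ⟨K, hK⟩ := hu.exists_ae_abs_le
  exact memLp_top_of_bound (hu.1.comp_quasiMeasurePreserving hβ) K (hβ.ae hK)

lemma birkhoff_eq_sum {Y : Type*} (α : Y → Y) (φ : Y → ℝ) (n : ℕ) :
    birkhoff α φ n = ∑ i ∈ Finset.range n, φ ∘ α^[i] := by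
  funext x
  simp [birkhoff, Finset.sum_apply]

lemma memLp_top_birkhoff {m : Measure X} {α : X → X} (hα : Measure.QuasiMeasurePreserving α m m)
    {φ : X → ℝ} (hφ : MemLp φ ⊤ m) (n : ℕ) : MemLp (birkhoff α φ n) ⊤ m := by
  rw [birkhoff_eq_sum]
  exact memLp_finsetSum' _ fun i _ => hφ.comp_quasiMeasurePreserving_top (hα.iterate i)

namespace PosFunctional

variable {m : Measure X} (μ : PosFunctional m)

lemma map_zero : μ.toFun 0 = 0 := by
  simpa using μ.map_smul' 0 _ (memLp_top_const (1 : ℝ))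

lemma map_sum {ι : Type*} (s : Finset ι) (F : ι → X → ℝ) (hF : ∀ i ∈ s, MemLp (F i) ⊤ m) :
    μ.toFun (∑ i ∈ s, F i) = ∑ i ∈ s, μ.toFun (F i) := by
  induction s using Finset.cons_induction with
  | empty => simpa using μ.map_zero
  | cons a s ha ih =>
    rw [Finset.forall_mem_cons] at hF
    rw [Finset.sum_cons, Finset.sum_cons, μ.map_add' _ _ hF.1 (memLp_finsetSum' s hF.2),
      ih hF.2]

lemma mono {f g : X → ℝ} (hf : MemLp f ⊤ m) (hg : MemLp g ⊤ m) (h : f ≤ᵐ[m] g) :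
    μ.toFun f ≤ μ.toFun g := by
  have hgf : 0 ≤ μ.toFun (g - f) :=
    μ.nonneg' _ (hg.sub hf) (by filter_upwards [h] with x hx using sub_nonneg.2 hx)
  have hsplit := μ.map_add' f (g - f) hf (hg.sub hf)
  rw [add_sub_cancel] at hsplit
  linarith

lemma le_sum_of_ae_le {ι : Type*} {s : Finset ι} {g : ι → X → ℝ} (c : ι → ℝ) {u : X → ℝ}
    (hu : MemLp u ⊤ m) (hg : ∀ i ∈ s, MemLp (g i) ⊤ m)
    (h : ∀ᵐ x ∂m, u x ≤ ∑ i ∈ s, c i * g i x) :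
    μ.toFun u ≤ ∑ i ∈ s, c i * μ.toFun (g i) := by
  have hcg : ∀ i ∈ s, MemLp (c i • g i) ⊤ m := fun i hi => (hg i hi).const_smul (c i)
  calc μ.toFun u ≤ μ.toFun (∑ i ∈ s, c i • g i) :=
        μ.mono hu (memLp_finsetSum' s hcg) (by
          filter_upwards [h] with x hx
          simpa [Finset.sum_apply] using hx)
    _ = ∑ i ∈ s, c i * μ.toFun (g i) := by
        rw [μ.map_sum s _ hcg]
        exact Finset.sum_congr rfl fun i hi => μ.map_smul' _ _ (hg i hi)

variable {μ} {α : X → X} (hμ : μ.Invariant α) (hα : Measure.QuasiMeasurePreserving α m m)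
include hμ hα

lemma map_comp_iterate {f : X → ℝ} (hf : MemLp f ⊤ m) (k : ℕ) :
    μ.toFun (f ∘ α^[k]) = μ.toFun f := by
  induction k with
  | zero => rfl
  | succ k ih =>
    rw [Function.iterate_succ, ← Function.comp_assoc,
      hμ _ (hf.comp_quasiMeasurePreserving_top (hα.iterate k)), ih]

lemma map_birkhoff {φ : X → ℝ} (hφ : MemLp φ ⊤ m) (n : ℕ) :
    μ.toFun (birkhoff α φ n) = n * μ.toFun φ := by
  rw [birkhoff_eq_sum, μ.map_sum _ _ fun i _ => hφ.comp_quasiMeasurePreserving_top (hα.iterate i)]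
  simp [map_comp_iterate hμ hα hφ]

end PosFunctional

lemma mul_log_div_le {w I S : ℝ} (hw : 0 ≤ w) (hI : 0 ≤ I) (hwI : w ≠ 0 → I ≠ 0) (hS : 0 < S) :
    w * Real.log (I / w) ≤ w * Real.log S + I / S - w := by
  rcases hw.eq_or_lt with rfl | hw
  · simpa using div_nonneg hI hS.le
  have hI : 0 < I := hI.lt_of_ne' (hwI hw.ne')
  have hlog := Real.log_le_sub_one_of_pos (show 0 < I / w / S by positivity)
  rw [Real.log_div (by positivity) hS.ne'] at hlog
  calc w * Real.log (I / w) = w * Real.log S + w * (Real.log (I / w) - Real.log S) := by ring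
    _ ≤ w * Real.log S + w * (I / w / S - 1) := by gcongr
    _ = w * Real.log S + I / S - w := by field_simp; ring

lemma sum_mul_log_div_le_log {ι : Type*} {s : Finset ι} {w I : ι → ℝ} {W : ℝ}
    (hw : ∀ i ∈ s, 0 ≤ w i) (hw1 : ∑ i ∈ s, w i = 1) (hI : ∀ i ∈ s, 0 ≤ I i)
    (hwI : ∀ i ∈ s, w i ≠ 0 → I i ≠ 0) (hW : ∑ i ∈ s, I i ≤ W) :
    ∑ i ∈ s, w i * Real.log (I i / w i) ≤ Real.log W := by
  obtain ⟨i, hi, hwi⟩ : ∃ i ∈ s, w i ≠ 0 := by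
    by_contra! h
    simp [Finset.sum_eq_zero h] at hw1
  set S := ∑ i ∈ s, I i
  have hS : 0 < S := ((hI i hi).lt_of_ne' (hwI i hi hwi)).trans_le (Finset.single_le_sum hI hi)
  calc ∑ i ∈ s, w i * Real.log (I i / w i)
      ≤ ∑ i ∈ s, (w i * Real.log S + I i / S - w i) :=
        Finset.sum_le_sum fun i hi => mul_log_div_le (hw i hi) (hI i hi) (hwI i hi) hS
    _ = Real.log S := by
        rw [Finset.sum_sub_distrib, Finset.sum_add_distrib, ← Finset.sum_mul, ← Finset.sum_div,
          hw1, div_self hS.ne']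
        ring
    _ ≤ Real.log W := Real.log_le_log hS hW

@[norm_cast]
lemma _root_.EReal.coe_finsetSum {ι : Type*} (s : Finset ι) (f : ι → ℝ) :
    ((∑ i ∈ s, f i : ℝ) : EReal) = ∑ i ∈ s, (f i : EReal) :=
  map_sum (⟨⟨Real.toEReal, EReal.coe_zero⟩, EReal.coe_add⟩ : ℝ →+ EReal) f s

section tauTerm

variable {m : Measure X} {α : X → X} {n : ℕ}

lemma tauTermR_eq_coe {w : ℝ} {f g : X → ℝ} (h : w ≠ 0 → wInt m α n g f ≠ 0) :
    tauTermR m α n w f g = ((w * Real.log (wInt m α n g f / w) : ℝ) : EReal) := by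
  by_cases hw : w = 0
  · simp [tauTermR, hw]
  · simp [tauTermR, hw, h hw]

lemma sum_exp_mul_wInt_le {ι : Type*} {s : Finset ι} {g : ι → X → ℝ} (c : ι → ℝ) {ψ f : X → ℝ}
    (hgf : ∀ i ∈ s, Integrable (fun x => g i x * |f (α^[n] x)|) m)
    (hψf : Integrable (fun x => Real.exp (ψ x) * |f (α^[n] x)|) m)
    (hgψ : ∀ᵐ x ∂m, ∑ i ∈ s, Real.exp (c i) * g i x ≤ Real.exp (ψ x)) :
    ∑ i ∈ s, Real.exp (c i) * wInt m α n (g i) f ≤ ∫ x, Real.exp (ψ x) * |f (α^[n] x)| ∂m := by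
  have hsum : ∀ x, ∑ i ∈ s, Real.exp (c i) * (g i x * |f (α^[n] x)|)
      = (∑ i ∈ s, Real.exp (c i) * g i x) * |f (α^[n] x)| := fun x => by
    simp_rw [Finset.sum_mul, mul_assoc]
  have hint i (hi : i ∈ s) := (hgf i hi).const_mul (Real.exp (c i))
  calc ∑ i ∈ s, Real.exp (c i) * wInt m α n (g i) f
      = ∫ x, ∑ i ∈ s, Real.exp (c i) * (g i x * |f (α^[n] x)|) ∂m := by
        rw [integral_finsetSum _ hint]
        simp only [wInt, integral_const_mul]
    _ ≤ ∫ x, Real.exp (ψ x) * |f (α^[n] x)| ∂m := by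
        refine integral_mono_ae (integrable_finsetSum _ hint) hψf ?_
        filter_upwards [hgψ] with x hx
        rw [hsum]
        exact mul_le_mul_of_nonneg_right hx (abs_nonneg _)

lemma sum_tauTermR_le {ι : Type*} {s : Finset ι} {g : ι → X → ℝ} {w : ι → ℝ} (c : ι → ℝ)
    {ψ f : X → ℝ} {W : ℝ} (hw : ∀ i ∈ s, 0 ≤ w i) (hw1 : ∑ i ∈ s, w i = 1)
    (hg : ∀ i ∈ s, 0 ≤ᵐ[m] g i) (hgf : ∀ i ∈ s, Integrable (fun x => g i x * |f (α^[n] x)|) m)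
    (hψf : Integrable (fun x => Real.exp (ψ x) * |f (α^[n] x)|) m)
    (hgψ : ∀ᵐ x ∂m, ∑ i ∈ s, Real.exp (c i) * g i x ≤ Real.exp (ψ x))
    (hW : ∫ x, Real.exp (ψ x) * |f (α^[n] x)| ∂m ≤ W) :
    ∑ i ∈ s, tauTermR m α n (w i) f (g i) ≤ ((Real.log W - ∑ i ∈ s, c i * w i : ℝ) : EReal) := by
  set I := fun i => wInt m α n (g i) f
  by_cases hbot : ∃ i ∈ s, w i ≠ 0 ∧ I i = 0
  · obtain ⟨i, hi, hwi, hIi⟩ := hbot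
    have hi_bot : tauTermR m α n (w i) f (g i) = ⊥ := by
      simp [tauTermR, hwi, show wInt m α n (g i) f = 0 from hIi]
    rw [← Finset.add_sum_erase s _ hi, hi_bot, EReal.bot_add]
    exact bot_le
  push Not at hbot
  have hI : ∀ i ∈ s, 0 ≤ I i := fun i hi => integral_nonneg_of_ae <| by
    filter_upwards [hg i hi] with x hx using mul_nonneg hx (abs_nonneg _)
  have hsum : ∑ i ∈ s, Real.exp (c i) * I i ≤ W :=
    (sum_exp_mul_wInt_le c hgf hψf hgψ).trans hW
  have hgibbs := sum_mul_log_div_le_log (I := fun i => Real.exp (c i) * I i) hw hw1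
    (fun i hi => mul_nonneg (Real.exp_nonneg _) (hI i hi))
    (fun i hi hwi => mul_ne_zero (Real.exp_ne_zero _) (hbot i hi hwi)) hsum
  have hshift : ∀ i ∈ s, w i * Real.log (Real.exp (c i) * I i / w i)
      = c i * w i + w i * Real.log (I i / w i) := fun i hi => by
    by_cases hwi : w i = 0
    · simp [hwi]
    rw [mul_div_assoc, Real.log_mul (Real.exp_ne_zero _) (div_ne_zero (hbot i hi hwi) hwi),
      Real.log_exp]
    ring
  rw [Finset.sum_congr rfl hshift, Finset.sum_add_distrib] at hgibbs
  rw [Finset.sum_congr rfl fun i hi => tauTermR_eq_coe (hbot i hi)]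
  have hreal : ∑ i ∈ s, w i * Real.log (I i / w i) ≤ Real.log W - ∑ i ∈ s, c i * w i := by
    linarith
  exact_mod_cast hreal

end tauTerm

section weightedOpNorm

variable {m : Measure X} {α : X → X} (hα : ShiftBounded m α) {φ : X → ℝ} (hφ : MemLp φ ⊤ m)
  (n : ℕ)
include hα

lemma integrable_abs_comp_iterate {f : X → ℝ} (hf : Integrable f m) :
    Integrable (fun x => |f (α^[n] x)|) m := by
  obtain ⟨C, hC⟩ := (hα.iterate n).exists_integral_abs_comp_le
  exact (hC f hf).1.abs

include hφ

lemma exists_ae_norm_exp_birkhoff_le :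
    ∃ K : ℝ, ∀ᵐ x ∂m, ‖Real.exp (birkhoff α φ n x)‖ ≤ Real.exp K := by
  obtain ⟨K, hK⟩ := (memLp_top_birkhoff hα.quasiMeasurePreserving hφ n).exists_ae_abs_le
  refine ⟨K, ?_⟩
  filter_upwards [hK] with x hx
  rw [Real.norm_eq_abs, Real.abs_exp]
  exact Real.exp_le_exp.2 ((le_abs_self _).trans hx)

lemma integrable_exp_birkhoff_mul {f : X → ℝ} (hf : Integrable f m) :
    Integrable (fun x => Real.exp (birkhoff α φ n x) * |f (α^[n] x)|) m := by
  obtain ⟨K, hK⟩ := exists_ae_norm_exp_birkhoff_le hα hφ n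
  exact (integrable_abs_comp_iterate hα n hf).bdd_mul (Real.continuous_exp.comp_aestronglyMeasurable
    (memLp_top_birkhoff hα.quasiMeasurePreserving hφ n).1) hK

lemma integral_le_weightedOpNorm {f : X → ℝ} (hf : f ∈ UnitL1 m) :
    ∫ x, Real.exp (birkhoff α φ n x) * |f (α^[n] x)| ∂m ≤ weightedOpNorm m α φ n := by
  obtain ⟨K, hK⟩ := exists_ae_norm_exp_birkhoff_le hα hφ n
  obtain ⟨C, hC⟩ := (hα.iterate n).exists_integral_abs_comp_le
  refine le_csSup ⟨Real.exp K * C, ?_⟩ ⟨f, hf, rfl⟩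
  rintro _ ⟨u, hu, rfl⟩
  calc ∫ x, Real.exp (birkhoff α φ n x) * |u (α^[n] x)| ∂m
      ≤ ∫ x, Real.exp K * |u (α^[n] x)| ∂m := by
        refine integral_mono_ae (integrable_exp_birkhoff_mul hα hφ n hu.1)
          ((integrable_abs_comp_iterate hα n hu.1).const_mul _) ?_
        filter_upwards [hK] with x hx
        exact mul_le_mul_of_nonneg_right ((le_abs_self _).trans (Real.norm_eq_abs _ ▸ hx))
          (abs_nonneg _)
    _ ≤ Real.exp K * C := by
        rw [integral_const_mul]
        simpa [hu.2] using mul_le_mul_of_nonneg_left (hC u hu.1).2 (Real.exp_nonneg K)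

end weightedOpNorm

section levelPart

variable {Y : Type*}

def levelPart (ψ : Y → ℝ) (j : ℤ) (x : Y) : ℝ := if ⌊ψ x⌋ = j then 1 else 0

lemma levelPart_nonneg (ψ : Y → ℝ) (j : ℤ) (x : Y) : 0 ≤ levelPart ψ j x := by
  unfold levelPart
  split_ifs <;> norm_num

lemma sum_mul_levelPart (ψ : Y → ℝ) (c : ℤ → ℝ) (s : Finset ℤ) (x : Y) :
    ∑ j ∈ s, c j * levelPart ψ j x = if ⌊ψ x⌋ ∈ s then c ⌊ψ x⌋ else 0 := by
  simp [levelPart, Finset.sum_ite_eq]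

lemma levelPart_injOn (ψ : Y → ℝ) : Set.InjOn (levelPart ψ) (Set.range fun x => ⌊ψ x⌋) := by
  rintro _ ⟨x, rfl⟩ k - hk
  by_contra hne
  simpa [levelPart, hne] using congrFun hk x

variable [MeasurableSpace Y] {m : Measure Y} {ψ : Y → ℝ} (hψ : Measurable ψ)
include hψ

lemma memLp_top_levelPart (j : ℤ) : MemLp (levelPart ψ j) ⊤ m := by
  refine memLp_top_of_bound (Measurable.aestronglyMeasurable ?_) 1 (ae_of_all _ fun x => ?_)
  · exact Measurable.ite (hψ.floor (measurableSet_singleton j)) measurable_const measurable_const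
  · unfold levelPart
    split_ifs <;> norm_num

variable {s : Finset ℤ} (hψs : ∀ᵐ x ∂m, ⌊ψ x⌋ ∈ s)
include hψs

lemma isPartUnity_image_levelPart (hs : ↑s ⊆ Set.range fun x => ⌊ψ x⌋) :
    IsPartUnity m (s.image (levelPart ψ)) := by
  refine ⟨fun g hg => ?_, ?_⟩
  · obtain ⟨j, -, rfl⟩ := Finset.mem_image.1 hg
    exact ⟨memLp_top_levelPart hψ j, ae_of_all _ (levelPart_nonneg ψ j)⟩
  · filter_upwards [hψs] with x hx
    simpa [Finset.sum_image ((levelPart_injOn ψ).mono hs), hx] using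
      sum_mul_levelPart ψ 1 s x

lemma PosFunctional.sum_levelPart (μ : PosFunctional m) :
    ∑ j ∈ s, μ.toFun (levelPart ψ j) = 1 := by
  rw [← μ.map_sum _ _ fun j _ => memLp_top_levelPart hψ j, ← μ.map_one']
  refine μ.congr_ae' _ _ (memLp_finsetSum' _ fun j _ => memLp_top_levelPart hψ j)
    (memLp_top_const 1) ?_
  filter_upwards [hψs] with x hx
  simpa [Finset.sum_apply, hx] using sum_mul_levelPart ψ 1 s x

lemma PosFunctional.le_sum_levelPart (μ : PosFunctional m) {u : Y → ℝ} (hu : MemLp u ⊤ m)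
    (huψ : u =ᵐ[m] ψ) : μ.toFun u ≤ ∑ j ∈ s, (j + 1) * μ.toFun (levelPart ψ j) := by
  refine μ.le_sum_of_ae_le _ hu (fun j _ => memLp_top_levelPart hψ j) ?_
  filter_upwards [hψs, huψ] with x hx hux
  rw [sum_mul_levelPart, if_pos hx, hux]
  exact (Int.lt_floor_add_one _).le

end levelPart

lemma tauNDW_le_of_forall {m : Measure X} {α : X → X} {n : ℕ} {D : Finset (X → ℝ)}
    {w : (X → ℝ) → ℝ} {b : EReal} (h : ∀ f ∈ UnitL1 m, ∑ g ∈ D, tauTermR m α n (w g) f g ≤ b) :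
    tauNDW m α n D w ≤ b := by
  unfold tauNDW
  split_ifs
  · exact bot_le
  · exact iSup₂_le h

theorem tauN_le_log_weightedOpNorm {m : Measure X} {α : X → X} (hα : ShiftBounded m α)
    {φ : X → ℝ} (hφ : MemLp φ ⊤ m) {μ : PosFunctional m} (hμ : μ.Invariant α) (n : ℕ) :
    tauN m α μ n ≤ ((Real.log (weightedOpNorm m α φ n) - n * μ.toFun φ + 1 : ℝ) : EReal) := by
  have hS := memLp_top_birkhoff hα.quasiMeasurePreserving hφ n
  obtain ⟨K, hK⟩ := hS.exists_ae_abs_le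
  set ψ := hS.1.mk (birkhoff α φ n)
  have hψ : Measurable ψ := hS.1.stronglyMeasurable_mk.measurable
  have hSψ : birkhoff α φ n =ᵐ[m] ψ := hS.1.ae_eq_mk
  -- only the attained levels, so that distinct `j ∈ s` give distinct elements of the partition
  set s := (Finset.Icc ⌊-K⌋ ⌊K⌋).filter (· ∈ Set.range fun x => ⌊ψ x⌋)
  have hs : ↑s ⊆ Set.range fun x => ⌊ψ x⌋ := fun j hj => (Finset.mem_filter.1 hj).2
  have hψs : ∀ᵐ x ∂m, ⌊ψ x⌋ ∈ s := by
    filter_upwards [hK, hSψ] with x hKx hx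
    rw [hx, abs_le] at hKx
    simp only [s, Finset.mem_filter, Finset.mem_Icc]
    exact ⟨⟨Int.floor_mono hKx.1, Int.floor_mono hKx.2⟩, x, rfl⟩
  have hw1 := μ.sum_levelPart hψ hψs
  have hμS := μ.le_sum_levelPart hψ hψs hS hSψ
  simp only [μ.map_birkhoff hμ hα.quasiMeasurePreserving hφ, add_mul, one_mul,
    Finset.sum_add_distrib, hw1] at hμS
  have hw : ∀ j ∈ s, 0 ≤ μ.toFun (levelPart ψ j) := fun j _ =>
    μ.nonneg' _ (memLp_top_levelPart hψ j) (ae_of_all _ (levelPart_nonneg ψ j))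
  have hexp : ∀ᵐ x ∂m,
      ∑ j ∈ s, Real.exp j * levelPart ψ j x ≤ Real.exp (birkhoff α φ n x) := by
    filter_upwards [hSψ] with x hx
    rw [sum_mul_levelPart, hx]
    split_ifs
    · exact Real.exp_le_exp.2 (Int.floor_le _)
    · exact (Real.exp_pos _).le
  refine (iInf₂_le _ (isPartUnity_image_levelPart hψ hψs hs)).trans
    (tauNDW_le_of_forall fun f hf => ?_)
  rw [Finset.sum_image ((levelPart_injOn ψ).mono hs)]
  calc ∑ j ∈ s, tauTermR m α n (μ.toFun (levelPart ψ j)) f (levelPart ψ j)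
      ≤ ((Real.log (weightedOpNorm m α φ n) - ∑ j ∈ s, j * μ.toFun (levelPart ψ j) : ℝ) :
          EReal) :=
        sum_tauTermR_le (fun j : ℤ => (j : ℝ)) hw hw1
          (fun j _ => ae_of_all _ (levelPart_nonneg ψ j))
          (fun j _ => (integrable_abs_comp_iterate hα n hf.1).mul_of_top_right
            (memLp_top_levelPart hψ j))
          (integrable_exp_birkhoff_mul hα hφ n hf.1) hexp (integral_le_weightedOpNorm hα hφ n hf)
    _ ≤ _ := EReal.coe_le_coe_iff.2 (by linarith)

theorem mu_add_tEntropy_le {m : Measure X} {α : X → X} (hα : ShiftBounded m α)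
    {φ : X → ℝ} (hφ : MemLp φ ⊤ m) {μ : PosFunctional m} (hμ : μ.Invariant α) {n : ℕ}
    (hn : 0 < n) :
    (μ.toFun φ : EReal) + tEntropy m α μ ≤
      ((Real.log (weightedOpNorm m α φ n) / n + 1 / n : ℝ) : EReal) := by
  calc (μ.toFun φ : EReal) + tEntropy m α μ
      ≤ μ.toFun φ + (((n : ℝ)⁻¹ : ℝ) : EReal) * tauN m α μ n := by
        gcongr
        exact iInf_le _ (⟨n, hn⟩ : {k : ℕ // 0 < k})
    _ ≤ μ.toFun φ + (((n : ℝ)⁻¹ : ℝ) : EReal) *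
          ((Real.log (weightedOpNorm m α φ n) - n * μ.toFun φ + 1 : ℝ) : EReal) := by
        gcongr
        exact tauN_le_log_weightedOpNorm hα hφ hμ n
    _ = ((Real.log (weightedOpNorm m α φ n) / n + 1 / n : ℝ) : EReal) := by
        rw [← EReal.coe_mul, ← EReal.coe_add]
        congr 1
        field_simp
        ring

theorem lambda_ge_mu_add_tEntropy_general
    (m : Measure X) (α : X → X) (hα : ShiftBounded m α)
    (φ : X → ℝ) (hφ : MemLp φ ⊤ m) (lam : ℝ)
    (hlam : Tendsto (fun n : ℕ => Real.log (weightedOpNorm m α φ n) / n) atTop (𝓝 lam))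
    (μ : PosFunctional m) (hμ : μ.Invariant α) :
    (μ.toFun φ : EReal) + tEntropy m α μ ≤ (lam : EReal) := by
  have hbound :
      Tendsto (fun n : ℕ => Real.log (weightedOpNorm m α φ n) / n + 1 / n) atTop (𝓝 lam) := by
    simpa using hlam.add tendsto_one_div_atTop_nhds_zero_nat
  refine ge_of_tendsto (EReal.tendsto_coe.2 hbound) ?_
  filter_upwards [eventually_gt_atTop 0] with n hn
  exact mu_add_tEntropy_le hα hφ hμ hn

/-- For every `φ ∈ L^∞(X,m)` and every `α`-invariant `μ ∈ M_α(X,m)` one has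
`λ(φ) ≥ μ(φ) + τ(μ)`. -/
theorem lambda_ge_mu_add_tEntropy
    (m : Measure X) [SigmaFinite m] (α : X → X) (hα : ShiftBounded m α)
    (φ : X → ℝ) (hφ : MemLp φ ⊤ m) (lam : ℝ)
    (hlam : Tendsto (fun n : ℕ => Real.log (weightedOpNorm m α φ n) / n) atTop (𝓝 lam))
    (μ : PosFunctional m) (hμ : μ.Invariant α) :
    (μ.toFun φ : EReal) + tEntropy m α μ ≤ (lam : EReal) :=
  lambda_ge_mu_add_tEntropy_general m α hα φ hφ lam hlam μ hμ
end TEntropyPaper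
end
end

section
/- The t-entropy functional μ ↦ τ(μ) is upper semicontinuous on M(X,m) with respect to the weak-* topology. -/
open MeasureTheory Filter Topology
open scoped Classical ENNReal NNReal

noncomputable section

/-!
For a partition of unity `D`, `τ_n(μ, D)` is the supremum over `f` of
`Σ_{g ∈ D} h(μ(g), c_g(f))`, where `h(w, c) = w log (c / w)` and `c_g(f) = ∫ g |f ∘ αⁿ| dm`.
Boundedness of the shift confines the vectors `c(f)` to a box `[0, Cⁿ]^D`. The function `h` is
jointly upper semicontinuous on `[0, ∞)²` and continuous in `c`, so the supremum over a set
with compact closure is upper semicontinuous in the weights (tube lemma), and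
`μ ↦ (μ(g))_{g ∈ D}` is weak-* continuous. Infima and multiplication by `1/n` preserve upper
semicontinuity.
-/

theorem EReal.upperSemicontinuous_sum {ι α : Type*} [TopologicalSpace α] {s : Finset ι}
    {f : ι → α → EReal} (hf : ∀ i ∈ s, UpperSemicontinuous (f i))
    (hf_top : ∀ i ∈ s, ∀ x, f i x ≠ ⊤) : UpperSemicontinuous fun x => ∑ i ∈ s, f i x := by
  induction s using Finset.induction_on with
  | empty => simpa using upperSemicontinuous_const
  | insert i s hi ih =>
    simp only [Finset.sum_insert hi]
    simp only [Finset.forall_mem_insert] at hf hf_top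
    refine hf.1.add' (ih hf.2 hf_top.2) fun x => EReal.continuousAt_add (Or.inl (hf_top.1 x))
      (Or.inr (Finset.sum_induction _ (· ≠ ⊤) (fun _ _ => EReal.add_ne_top) EReal.zero_ne_top
        fun j hj => hf_top.2 j hj x))

theorem EReal.lowerSemicontinuous_sum {ι α : Type*} [TopologicalSpace α] {s : Finset ι}
    {f : ι → α → EReal} (hf : ∀ i ∈ s, LowerSemicontinuous (f i))
    (hf_top : ∀ i ∈ s, ∀ x, f i x ≠ ⊤) : LowerSemicontinuous fun x => ∑ i ∈ s, f i x := by
  induction s using Finset.induction_on with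
  | empty => simpa using lowerSemicontinuous_const
  | insert i s hi ih =>
    simp only [Finset.sum_insert hi]
    simp only [Finset.forall_mem_insert] at hf hf_top
    refine hf.1.add' (ih hf.2 hf_top.2) fun x => EReal.continuousAt_add (Or.inl (hf_top.1 x))
      (Or.inr (Finset.sum_induction _ (· ≠ ⊤) (fun _ _ => EReal.add_ne_top) EReal.zero_ne_top
        fun j hj => hf_top.2 j hj x))

theorem upperSemicontinuous_biSup_of_isCompact_closure {α β γ : Type*} [TopologicalSpace α]
    [TopologicalSpace β] [CompleteLinearOrder γ] [TopologicalSpace γ] [OrderTopology γ]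
    [DenselyOrdered γ] {F : α → β → γ} (hF : UpperSemicontinuous (Function.uncurry F))
    (hF_right : ∀ x, LowerSemicontinuous (F x)) {S : Set β} (hS : IsCompact (closure S)) :
    UpperSemicontinuous fun x => ⨆ y ∈ S, F x y := by
  intro x₀ z hz
  obtain ⟨z', hz', hz'z⟩ := exists_between hz
  -- lower semicontinuity of `F x₀` extends the bound from `S` to its closure
  have hclosure : ∀ y ∈ closure S, F x₀ y < z' := fun y hy =>
    lt_of_le_of_lt (closure_minimal (fun y hy => le_iSup₂ (f := fun y _ => F x₀ y) y hy)
      ((hF_right x₀).isClosed_preimage _) hy) hz'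
  filter_upwards [hS.eventually_forall_of_forall_eventually (P := fun x y => F x y < z')
    fun y hy => hF (x₀, y) z' (hclosure y hy)] with x hx
  exact (iSup₂_le fun y hy => (hx y (subset_closure hy)).le).trans_lt hz'z

/-- At `c = 0 < w` the `EReal` logarithm gives `⊥`, matching the convention of `tauTermR`. -/
def mulLogDiv (w c : ℝ≥0) : EReal :=
  if w = 0 then 0 else ((w : ℝ) : EReal) * ENNReal.log ((c / w : ℝ≥0) : ℝ≥0∞)

theorem mulLogDiv_le (w c : ℝ≥0) : mulLogDiv w c ≤ ((2 * √(w * c) : ℝ) : EReal) := by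
  unfold mulLogDiv
  split_ifs with hw
  · exact_mod_cast (by positivity : (0 : ℝ) ≤ 2 * √(w * c))
  rcases eq_or_ne c 0 with rfl | hc
  · simp [EReal.coe_mul_bot_of_pos (NNReal.coe_pos.2 (pos_iff_ne_zero.2 hw))]
  have hcw : (0 : ℝ) < c / w := by positivity
  rw [← ENNReal.ofReal_coe_nnreal, NNReal.coe_div, ENNReal.log_ofReal_of_pos hcw, ← EReal.coe_mul,
    EReal.coe_le_coe_iff]
  have hsqrt : Real.log (c / w) ≤ 2 * √(c / w) := by
    have := Real.log_le_sub_one_of_pos (Real.sqrt_pos.2 hcw)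
    rw [Real.log_sqrt hcw.le] at this
    linarith
  calc (w : ℝ) * Real.log (c / w) ≤ w * (2 * √(c / w)) := by gcongr
    _ = 2 * √(w * c) := by
      rw [show (w : ℝ) * c = w ^ 2 * (c / w) by field_simp, Real.sqrt_mul (sq_nonneg _),
        Real.sqrt_sq w.coe_nonneg]
      ring

theorem mulLogDiv_ne_top (w c : ℝ≥0) : mulLogDiv w c ≠ ⊤ :=
  ((mulLogDiv_le w c).trans_lt (EReal.coe_lt_top _)).ne

theorem continuousAt_mulLogDiv {p : ℝ≥0 × ℝ≥0} (hp : p.1 ≠ 0) :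
    ContinuousAt (fun q : ℝ≥0 × ℝ≥0 => mulLogDiv q.1 q.2) p := by
  have hne : ∀ᶠ q : ℝ≥0 × ℝ≥0 in 𝓝 p, q.1 ≠ 0 :=
    continuousAt_fst.eventually_ne hp
  refine ContinuousAt.congr ?_ (hne.mono fun q hq => (if_neg hq).symm)
  have hlog : ContinuousAt (fun q : ℝ≥0 × ℝ≥0 => ENNReal.log ((q.2 / q.1 : ℝ≥0) : ℝ≥0∞)) p :=
    ENNReal.continuous_log.continuousAt.comp
      (ENNReal.continuous_coe.continuousAt.comp (continuousAt_snd.div₀ continuousAt_fst hp))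
  have hw : ContinuousAt (fun q : ℝ≥0 × ℝ≥0 => ((q.1 : ℝ) : EReal)) p :=
    (continuous_coe_real_ereal.comp (NNReal.continuous_coe.comp continuous_fst)).continuousAt
  refine (EReal.continuousAt_mul ?_ ?_ ?_ ?_).comp (hw.prodMk hlog) <;> simp [hp]

theorem upperSemicontinuous_mulLogDiv :
    UpperSemicontinuous fun p : ℝ≥0 × ℝ≥0 => mulLogDiv p.1 p.2 := by
  intro p y hy
  rcases ne_or_eq p.1 0 with hp | hp
  · exact (continuousAt_mulLogDiv hp).upperSemicontinuousAt y hy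
  -- `mulLogDiv` is discontinuous at `(0, 0)`, but the bound `2 √(w c)` tends to `0` as `w → 0`
  have hbound : ContinuousAt (fun q : ℝ≥0 × ℝ≥0 => ((2 * √(q.1 * q.2) : ℝ) : EReal)) p :=
    (continuous_coe_real_ereal.comp (by fun_prop)).continuousAt
  have h0 : ((2 * √(p.1 * p.2) : ℝ) : EReal) < y := by
    simpa [mulLogDiv, hp] using hy
  filter_upwards [hbound.eventually_lt continuousAt_const h0] with q hq
  exact (mulLogDiv_le q.1 q.2).trans_lt hq

theorem continuous_mulLogDiv_right (w : ℝ≥0) : Continuous (mulLogDiv w) := by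
  rcases eq_or_ne w 0 with rfl | hw
  · exact (continuous_const (y := (0 : EReal))).congr fun c => by simp [mulLogDiv]
  exact continuous_iff_continuousAt.2 fun c =>
    (continuousAt_mulLogDiv (p := (w, c)) hw).comp
      (continuous_const.prodMk continuous_id).continuousAt

theorem upperSemicontinuous_biSup_sum_mulLogDiv {ι : Type*} [Fintype ι] {S : Set (ι → ℝ≥0)}
    (hS : BddAbove S) :
    UpperSemicontinuous fun w : ι → ℝ≥0 => ⨆ c ∈ S, ∑ i, mulLogDiv (w i) (c i) := by
  obtain ⟨K, hK⟩ := hS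
  have hjoint : UpperSemicontinuous fun p : (ι → ℝ≥0) × (ι → ℝ≥0) =>
      ∑ i, mulLogDiv (p.1 i) (p.2 i) :=
    EReal.upperSemicontinuous_sum (fun i _ => upperSemicontinuous_mulLogDiv.comp
      (g := fun p : (ι → ℝ≥0) × (ι → ℝ≥0) => (p.1 i, p.2 i)) (by fun_prop))
      fun i _ _ => mulLogDiv_ne_top _ _
  have hright (w : ι → ℝ≥0) :
      LowerSemicontinuous fun c : ι → ℝ≥0 => ∑ i, mulLogDiv (w i) (c i) :=
    EReal.lowerSemicontinuous_sum
      (fun i _ => ((continuous_mulLogDiv_right _).comp (continuous_apply i)).lowerSemicontinuous)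
      fun i _ _ => mulLogDiv_ne_top _ _
  refine upperSemicontinuous_biSup_of_isCompact_closure hjoint hright ?_
  exact isCompact_Icc.of_isClosed_subset isClosed_closure
    (closure_minimal (fun c hc => ⟨zero_le, hK hc⟩) isClosed_Icc)

theorem UpperSemicontinuous.ereal_const_mul {α : Type*} [TopologicalSpace α] {f : α → EReal}
    (hf : UpperSemicontinuous f) {c : ℝ} (hc : 0 ≤ c) :
    UpperSemicontinuous fun x => (c : EReal) * f x :=
  (continuous_iff_continuousAt.2 fun _ => EReal.Tendsto.const_mul tendsto_id
      (.inl (EReal.coe_ne_bot c)) (.inl (EReal.coe_ne_top c))).comp_upperSemicontinuous hf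
    (monotone_id.const_mul (EReal.coe_nonneg.2 hc))

namespace TEntropyPaper

variable {X : Type*} [MeasurableSpace X]

section

variable {m : Measure X} {α : X → X}

theorem ShiftBounded.exists_map_iterate_le (hα : ShiftBounded m α) :
    ∃ C : ℝ≥0, ∀ n, m.map α^[n] ≤ (C : ℝ≥0∞) ^ n • m := by
  obtain ⟨hmeas, C, hC⟩ := hα
  have hmap : m.map α ≤ (C : ℝ≥0∞) • m := Measure.le_intro fun s hs _ => by
    simpa [Measure.map_apply hmeas hs] using hC s hs
  refine ⟨C, fun n => ?_⟩
  induction n with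
  | zero => simp
  | succ n ih =>
    calc m.map α^[n + 1] = (m.map α).map α^[n] := by
          rw [Measure.map_map (hmeas.iterate n) hmeas, Function.iterate_succ]
      _ ≤ ((C : ℝ≥0∞) • m).map α^[n] := Measure.map_mono hmap (hmeas.iterate n)
      _ = (C : ℝ≥0∞) • m.map α^[n] := Measure.map_smul _ _ _
      _ ≤ (C : ℝ≥0∞) • ((C : ℝ≥0∞) ^ n • m) := by gcongr
      _ = (C : ℝ≥0∞) ^ (n + 1) • m := by rw [smul_smul, pow_succ']

theorem ShiftBounded.exists_lintegral_comp_iterate_le (hα : ShiftBounded m α) :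
    ∃ C : ℝ≥0, ∀ n (f : X → ℝ), AEStronglyMeasurable f m →
      ∫⁻ x, ‖f (α^[n] x)‖ₑ ∂m ≤ (C : ℝ≥0∞) ^ n * ∫⁻ x, ‖f x‖ₑ ∂m := by
  obtain ⟨C, hC⟩ := hα.exists_map_iterate_le
  refine ⟨C, fun n f hf => ?_⟩
  have hac : m.map α^[n] ≪ m := Measure.absolutelyContinuous_of_le_smul (hC n)
  rw [← lintegral_map' (hf.mono_ac hac).enorm (hα.1.iterate n).aemeasurable,
    ← smul_eq_mul, ← lintegral_smul_measure]
  exact lintegral_mono' (hC n) le_rfl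

theorem lintegral_enorm_eq_one_of_mem_unitL1 {f : X → ℝ} (hf : f ∈ UnitL1 m) :
    ∫⁻ x, ‖f x‖ₑ ∂m = 1 := by
  rw [← ofReal_integral_norm_eq_lintegral_enorm hf.1]
  simpa [Real.norm_eq_abs] using hf.2

theorem wInt_nonneg (n : ℕ) {g : X → ℝ} (hg : 0 ≤ᵐ[m] g) (f : X → ℝ) : 0 ≤ wInt m α n g f :=
  integral_nonneg_of_ae (hg.mono fun _ hx => mul_nonneg hx (abs_nonneg _))

theorem ShiftBounded.exists_wInt_le (hα : ShiftBounded m α) :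
    ∃ C : ℝ≥0, ∀ n {g f : X → ℝ}, (∀ᵐ x ∂m, |g x| ≤ 1) → f ∈ UnitL1 m →
      wInt m α n g f ≤ C ^ n := by
  obtain ⟨C, hC⟩ := hα.exists_lintegral_comp_iterate_le
  refine ⟨C, fun n g f hg hf => ?_⟩
  have henorm : ‖wInt m α n g f‖ₑ ≤ (C : ℝ≥0∞) ^ n :=
    calc ‖wInt m α n g f‖ₑ ≤ ∫⁻ x, ‖g x * |f (α^[n] x)|‖ₑ ∂m := enorm_integral_le_lintegral_enorm _
      _ ≤ ∫⁻ x, ‖f (α^[n] x)‖ₑ ∂m := lintegral_mono_ae <| hg.mono fun x hx => by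
          rw [enorm_mul, Real.enorm_abs]
          exact mul_le_of_le_one_left zero_le
            (by rw [Real.enorm_eq_ofReal_abs]; exact ENNReal.ofReal_le_one.2 hx)
      _ ≤ (C : ℝ≥0∞) ^ n := by
          simpa [lintegral_enorm_eq_one_of_mem_unitL1 hf] using hC n f hf.1.1
  rw [← ENNReal.coe_pow, enorm_le_coe] at henorm
  exact (le_abs_self _).trans (by exact_mod_cast henorm)

theorem IsPartUnity.ae_abs_le_one {D : Finset (X → ℝ)} (hD : IsPartUnity m D) {g : X → ℝ}
    (hg : g ∈ D) : ∀ᵐ x ∂m, |g x| ≤ 1 := by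
  have hnonneg : ∀ᵐ x ∂m, ∀ g' ∈ D, 0 ≤ g' x :=
    (eventually_all_finset D).2 fun g' hg' => (hD.1 g' hg').2
  filter_upwards [hnonneg, hD.2] with x hx hsum
  exact abs_le.2 ⟨by linarith [hx g hg], hsum ▸ Finset.single_le_sum hx hg⟩

theorem PosFunctional.toFun_zero (μ : PosFunctional m) : μ.toFun 0 = 0 := by
  simpa using μ.map_smul' 0 (fun _ => 1) (memLp_top_const 1)

theorem PosFunctional.continuous_toFun {g : X → ℝ} (hg : MemLp g ⊤ m) :
    Continuous fun μ : PosFunctional m => μ.toFun g :=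
  (continuous_apply (⟨g, hg⟩ : {f : X → ℝ // MemLp f ⊤ m})).comp
    (continuous_induced_dom : Continuous (evalMap m))

theorem tauND_eq_iSup (μ : PosFunctional m) (n : ℕ) {D : Finset (X → ℝ)} (hD : IsPartUnity m D) :
    tauND m α μ n D = ⨆ f ∈ UnitL1 m, ∑ g ∈ D, tauTermR m α n (μ.toFun g) f g := by
  rw [tauND, tauNDW, if_neg]
  rintro ⟨g, hg, hint, hpos⟩
  have hnull : g =ᵐ[m] 0 := by
    have := (lintegral_eq_zero_iff'
      (hD.1 g hg).1.aestronglyMeasurable.aemeasurable.ennreal_ofReal).1 hint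
    filter_upwards [this, (hD.1 g hg).2] with x hx hx0
    exact le_antisymm (ENNReal.ofReal_eq_zero.1 hx) hx0
  rw [μ.congr_ae' g 0 (hD.1 g hg).1 MemLp.zero hnull, μ.toFun_zero] at hpos
  exact lt_irrefl _ hpos

theorem tauTermR_eq_mulLogDiv (n : ℕ) {w : ℝ} (hw : 0 ≤ w) (f : X → ℝ) {g : X → ℝ}
    (hc : 0 ≤ wInt m α n g f) :
    tauTermR m α n w f g = mulLogDiv w.toNNReal (wInt m α n g f).toNNReal := by
  unfold tauTermR mulLogDiv
  rcases hw.eq_or_lt with rfl | hw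
  · simp
  rw [if_neg hw.ne', if_neg (Real.toNNReal_pos.2 hw).ne', Real.coe_toNNReal _ hw.le]
  rcases hc.eq_or_lt with hc0 | hc
  · simp [← hc0, EReal.coe_mul_bot_of_pos hw]
  rw [if_neg hc.ne', ← ENNReal.ofReal_coe_nnreal, NNReal.coe_div, Real.coe_toNNReal _ hc.le,
    Real.coe_toNNReal _ hw.le, ENNReal.log_ofReal_of_pos (div_pos hc hw), EReal.coe_mul]

theorem tauND_eq_biSup_mulLogDiv (μ : PosFunctional m) (n : ℕ) {D : Finset (X → ℝ)}
    (hD : IsPartUnity m D) :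
    tauND m α μ n D = ⨆ c ∈ (fun f (g : D) => (wInt m α n g f).toNNReal) '' UnitL1 m,
      ∑ g : D, mulLogDiv (μ.toFun g).toNNReal (c g) := by
  rw [tauND_eq_iSup μ n hD, iSup_image]
  refine iSup_congr fun f => iSup_congr fun _ => ?_
  rw [← Finset.sum_coe_sort D]
  exact Finset.sum_congr rfl fun g _ => tauTermR_eq_mulLogDiv n
    (μ.nonneg' g (hD.1 g g.2).1 (hD.1 g g.2).2) f (wInt_nonneg n (hD.1 g g.2).2 f)

theorem upperSemicontinuous_tauND (hα : ShiftBounded m α) (n : ℕ) {D : Finset (X → ℝ)}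
    (hD : IsPartUnity m D) : UpperSemicontinuous fun μ : PosFunctional m => tauND m α μ n D := by
  obtain ⟨C, hC⟩ := hα.exists_wInt_le
  have hbdd : BddAbove ((fun f (g : D) => (wInt m α n g f).toNNReal) '' UnitL1 m) := by
    refine ⟨fun _ => C ^ n, ?_⟩
    rintro _ ⟨f, hf, rfl⟩ g
    exact Real.toNNReal_le_iff_le_coe.2 (by simpa using hC n (hD.ae_abs_le_one g.2) hf)
  have hweights : Continuous fun (μ : PosFunctional m) (g : D) => (μ.toFun g).toNNReal :=
    continuous_pi fun g =>
      continuous_real_toNNReal.comp (PosFunctional.continuous_toFun (hD.1 g g.2).1)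
  simp_rw [tauND_eq_biSup_mulLogDiv _ n hD]
  exact (upperSemicontinuous_biSup_sum_mulLogDiv hbdd).comp hweights

theorem upperSemicontinuous_tauN (hα : ShiftBounded m α) (n : ℕ) :
    UpperSemicontinuous fun μ : PosFunctional m => tauN m α μ n :=
  upperSemicontinuous_iInf fun _ => upperSemicontinuous_iInf fun hD =>
    upperSemicontinuous_tauND hα n hD

end

theorem tEntropy_upperSemicontinuous_general
    (m : Measure X) (α : X → X) (hα : ShiftBounded m α) :
    UpperSemicontinuous (fun μ : PosFunctional m => tEntropy m α μ) :=
  upperSemicontinuous_iInf fun n =>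
    (upperSemicontinuous_tauN hα n).ereal_const_mul (inv_nonneg.2 (Nat.cast_nonneg _))

/-- The `t`-entropy functional `μ ↦ τ(μ)` is upper semicontinuous on `M(X,m)` with
respect to the weak-* topology. -/
theorem tEntropy_upperSemicontinuous
    (m : Measure X) [SigmaFinite m] (α : X → X) (hα : ShiftBounded m α) :
    UpperSemicontinuous (fun μ : PosFunctional m => tEntropy m α μ) :=
  tEntropy_upperSemicontinuous_general m α hα

end TEntropyPaper
end
end
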